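/- Let K be a field and n ∈ ℕ. Suppose a family {A_i}_{i∈S} is a basis of a free subgroup F ≤ GL(n,K) such that det(M − I_n) ≠ 0 for every M ∈ F \ {I_n}. Fix x̂ ∈ K^n and set u_i := (I_n − A_i)·x̂ and T_i(x) := A_i x + u_i. Then {T_i}_{i∈S} is a basis of a free subgroup F' of the group of invertible affine transformations of K^n, and F' acts on K^n \ {x̂} without nontrivial fixed points. If, additionally, K carries a non-Archimedean valuation |·|, x ∈ K^n with x ≠ x̂, 0 < r < ‖x − x̂‖, and F ≤ SL(n,D,ε) for some 0 < ε ≤ ε₀, where ε₀ := min(r/‖x − x̂‖, 1/‖x̂‖) if x̂ ≠ 0 and ε₀ := r/‖x‖ if x̂ = 0, then F' ≤ SA(n,D,ε) and F' acts on the balls B[x,r], B(x,r) and on the sphere S[x,r] without nontrivial fixed points. -/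

import Mathlib

open scoped Classical

structure IsNAV {K : Type*} [Field K] (v : K → ℝ) : Prop where
  nonneg : ∀ x, 0 ≤ v x
  eq_zero_iff : ∀ x, v x = 0 ↔ x = 0
  map_mul' : ∀ x y, v (x * y) = v x * v y
  add_le' : ∀ x y, v (x + y) ≤ max (v x) (v y)

/-- standard norm on K^n -/
def stdNorm {K : Type*} [Field K] (v : K → ℝ) {n : ℕ} (x : Fin n → K) : ℝ :=
  (List.ofFn fun i => v (x i)).foldr max 0

def cBall {K : Type*} [Field K] (v : K → ℝ) {n : ℕ} (c : Fin n → K) (r : ℝ) :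
    Set (Fin n → K) := {x | stdNorm v (x - c) ≤ r}

def oBall {K : Type*} [Field K] (v : K → ℝ) {n : ℕ} (c : Fin n → K) (r : ℝ) :
    Set (Fin n → K) := {x | stdNorm v (x - c) < r}

def sph {K : Type*} [Field K] (v : K → ℝ) {n : ℕ} (c : Fin n → K) (r : ℝ) :
    Set (Fin n → K) := {x | stdNorm v (x - c) = r}

def EquidecompUsing {X : Type*} (G : Set (X → X)) (A B : Set X) (n : ℕ) : Prop :=
  ∃ (P Q : Fin n → Set X) (g : Fin n → X → X),
    (∀ i, g i ∈ G) ∧ Pairwise (Function.onFun Disjoint P) ∧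
    Pairwise (Function.onFun Disjoint Q) ∧
    (⋃ i, P i) = A ∧ (⋃ i, Q i) = B ∧ ∀ i, g i '' P i = Q i

def ParadoxicalUsing {X : Type*} (G : Set (X → X)) (E : Set X) (r : ℕ) : Prop :=
  E.Nonempty ∧ ∃ m k : ℕ, m + k = r ∧
    ∃ (A : Fin m → Set X) (B : Fin k → Set X) (g : Fin m → X → X) (h : Fin k → X → X),
      (∀ i, g i ∈ G) ∧ (∀ j, h j ∈ G) ∧
      Pairwise (Function.onFun Disjoint (Sum.elim A B)) ∧
      ((⋃ i, A i) ∪ ⋃ j, B j) = E ∧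
      Pairwise (Function.onFun Disjoint fun i => g i '' A i) ∧ (⋃ i, g i '' A i) = E ∧
      Pairwise (Function.onFun Disjoint fun j => h j '' B j) ∧ (⋃ j, h j '' B j) = E

/-- membership in `SA(n,D,ε)` (as a set of self-maps of `K^n`) -/
def memSAeps {K : Type*} [Field K] (v : K → ℝ) {n : ℕ} (ε : ℝ)
    (f : (Fin n → K) → (Fin n → K)) : Prop :=
  ∃ (M : Matrix (Fin n) (Fin n) K) (τ : Fin n → K),
    (∀ i j, v (M i j) ≤ 1) ∧ M.det = 1 ∧
    (∀ i, v (M i i - 1) < ε) ∧ (∀ i j, i ≠ j → v (M i j) < ε) ∧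
    (∀ i, v (τ i) ≤ 1) ∧ ∀ y, f y = M.mulVec y + τ

/-!
Each `T_i` is `A_i` conjugated by the translation `y ↦ y + x̂`, so `w ↦ T_w` is the free
representation `w ↦ A_w` followed by an injective homomorphism `GL(n,K) → Perm(K^n)`.
A fixed point `y` of `T_w` satisfies `(A_w - 1)(y - x̂) = 0`, which forces `y = x̂` when
`det (A_w - 1) ≠ 0`; the balls and the sphere around `x` of radius `r < ‖x - x̂‖` miss `x̂`.
Finally the translation part `(1 - A_w) x̂` of `T_w` has entries of size at most `ε ‖x̂‖ ≤ 1`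
by the ultrametric inequality.
-/

open Matrix

section AffineConj

variable {R : Type*} [CommRing R] {n : Type*} [Fintype n] [DecidableEq n]

def affineConj (c : n → R) : GL n R →* Equiv.Perm (n → R) :=
  (MulAut.conj (Equiv.addRight c)).toMonoidHom.comp
    ((MulAction.toPermHom _ (n → R)).comp GeneralLinearGroup.toLin.toMonoidHom)

lemma affineConj_apply (c : n → R) (M : GL n R) (y : n → R) :
    affineConj c M y = (M : Matrix n n R) *ᵥ (y - c) + c := by
  simp [affineConj, MulAut.conj_apply, Equiv.Perm.mul_apply, Equiv.Perm.inv_def, Units.smul_def,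
    sub_eq_add_neg, mulVec_add, mulVec_neg]

lemma affineConj_apply_eq_mulVec_add (c : n → R) (M : GL n R) (y : n → R) :
    affineConj c M y = (M : Matrix n n R) *ᵥ y + (1 - (M : Matrix n n R)) *ᵥ c := by
  rw [affineConj_apply, mulVec_sub, sub_mulVec, one_mulVec]
  abel

lemma affineConj_injective (c : n → R) : Function.Injective (affineConj c) := by
  refine (injective_iff_map_eq_one _).2 fun M hM => ?_
  ext1
  refine ext_iff_mulVec.2 fun y => ?_
  simpa [affineConj_apply] using congr($hM (y + c))

lemma eq_of_affineConj_apply_eq [IsDomain R] {c : n → R} {M : GL n R}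
    (hM : ((M : Matrix n n R) - 1).det ≠ 0) {y : n → R} (hy : affineConj c M y = y) :
    y = c := by
  rw [affineConj_apply, ← eq_sub_iff_add_eq] at hy
  refine sub_eq_zero.1 (eq_zero_of_mulVec_eq_zero hM ?_)
  rw [sub_mulVec, one_mulVec, hy, sub_self]

end AffineConj

section Valuation

variable {K : Type*} [Field K] {v : K → ℝ}

def IsNAV.toAbsoluteValue (hv : IsNAV v) : AbsoluteValue K ℝ where
  toFun := v
  map_mul' := hv.map_mul'
  nonneg' := hv.nonneg
  eq_zero' := hv.eq_zero_iff
  add_le' x y := (hv.add_le' x y).trans (max_le_add_of_nonneg (hv.nonneg x) (hv.nonneg y))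

lemma IsNAV.map_zero (hv : IsNAV v) : v 0 = 0 := hv.toAbsoluteValue.map_zero

lemma IsNAV.map_neg (hv : IsNAV v) (x : K) : v (-x) = v x := hv.toAbsoluteValue.map_neg x

lemma IsNAV.map_sum_le {ι : Type*} (hv : IsNAV v) (s : Finset ι) (f : ι → K) {c : ℝ}
    (hc : 0 ≤ c) (h : ∀ i ∈ s, v (f i) ≤ c) : v (∑ i ∈ s, f i) ≤ c :=
  Finset.sum_induction f (fun x => v x ≤ c) (fun a b ha hb => (hv.add_le' a b).trans (max_le ha hb))
    (by rwa [hv.map_zero]) h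

lemma IsNAV.map_mulVec_apply_le_one {m : Type*} [Fintype m] (hv : IsNAV v) {M : Matrix m m K}
    {x : m → K} {ε : ℝ} (hM : ∀ i j, v (M i j) ≤ ε) (hx : ∀ j, ε * v (x j) ≤ 1) (i : m) :
    v ((M *ᵥ x) i) ≤ 1 :=
  hv.map_sum_le _ _ zero_le_one fun j _ => by
    rw [hv.map_mul']
    exact (mul_le_mul_of_nonneg_right (hM i j) (hv.nonneg _)).trans (hx j)

variable {n : ℕ}

lemma le_stdNorm (v : K → ℝ) (x : Fin n → K) (i : Fin n) : v (x i) ≤ stdNorm v x :=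
  List.le_max_of_le' 0 (List.mem_ofFn.2 ⟨i, rfl⟩) le_rfl

lemma IsNAV.stdNorm_sub_comm (hv : IsNAV v) (x y : Fin n → K) :
    stdNorm v (x - y) = stdNorm v (y - x) := by
  simp only [stdNorm, ← neg_sub y x, Pi.neg_apply, hv.map_neg]

lemma IsNAV.mul_apply_le_one (hv : IsNAV v) {c : Fin n → K} {ε : ℝ} (hε : 0 < ε)
    (hεc : c ≠ 0 → ε ≤ 1 / stdNorm v c) (j : Fin n) : ε * v (c j) ≤ 1 := by
  by_cases hc : c = 0
  · simp [hc, hv.map_zero]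
  have hpos : 0 < stdNorm v c := one_div_pos.1 (hε.trans_le (hεc hc))
  calc ε * v (c j) ≤ ε * stdNorm v c := mul_le_mul_of_nonneg_left (le_stdNorm v c j) hε.le
    _ ≤ 1 := (le_div_iff₀ hpos).1 (hεc hc)

lemma IsNAV.notMem_cBall (hv : IsNAV v) {x c : Fin n → K} {r : ℝ}
    (hr : r < stdNorm v (x - c)) : c ∉ cBall v x r := by
  show ¬stdNorm v (c - x) ≤ r
  rwa [not_le, hv.stdNorm_sub_comm]

lemma oBall_subset_cBall (v : K → ℝ) (c : Fin n → K) (r : ℝ) : oBall v c r ⊆ cBall v c r :=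
  fun _ hy => (show stdNorm v _ < r from hy).le

lemma sph_subset_cBall (v : K → ℝ) (c : Fin n → K) (r : ℝ) : sph v c r ⊆ cBall v c r :=
  fun _ hy => (show stdNorm v _ = r from hy).le

lemma memSAeps_affineConj (hv : IsNAV v) {ε : ℝ} {c : Fin n → K} {M : GL (Fin n) K}
    (hM : (∀ i j, v ((M : Matrix (Fin n) (Fin n) K) i j) ≤ 1) ∧
      (M : Matrix (Fin n) (Fin n) K).det = 1 ∧
      (∀ i, v ((M : Matrix (Fin n) (Fin n) K) i i - 1) < ε) ∧
      (∀ i j, i ≠ j → v ((M : Matrix (Fin n) (Fin n) K) i j) < ε))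
    (hc : ∀ j, ε * v (c j) ≤ 1) : memSAeps v ε (affineConj c M) := by
  obtain ⟨hint, hdet, hdiag, hoff⟩ := hM
  have hsub : ∀ i j, v ((1 - (M : Matrix (Fin n) (Fin n) K)) i j) ≤ ε := by
    intro i j
    rcases eq_or_ne i j with rfl | hij
    · rw [Matrix.sub_apply, one_apply_eq, ← neg_sub, hv.map_neg]
      exact (hdiag i).le
    · rw [Matrix.sub_apply, one_apply_ne hij, zero_sub, hv.map_neg]
      exact (hoff i j hij).le
  exact ⟨M, _, hint, hdet, hdiag, hoff, hv.map_mulVec_apply_le_one hsub hc,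
    affineConj_apply_eq_mulVec_add c M⟩

end Valuation

/-- Free groups of affine maps `T_i(x) = A_i x + (I - A_i) xh` obtained
from a free group of matrices all of whose nonidentity elements `M` satisfy
`det (M - I) ≠ 0`; they act freely off `xh`, and (in the valued case) on suitable balls
and spheres, while lying in `SA(n,D,ε)`. -/
theorem free_affine_group_of_free_linear
    {K : Type*} [Field K] (n : ℕ) {S : Type*}
    (A : S → GL (Fin n) K)
    -- `{A_i}` is a basis of a free subgroup `F ≤ GL(n,K)`
    (hfree : Function.Injective (FreeGroup.lift A : FreeGroup S →* GL (Fin n) K))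
    -- `det (M - I_n) ≠ 0` for every `M ∈ F \ {I_n}`
    (hdet : ∀ w : FreeGroup S, w ≠ 1 →
      (((FreeGroup.lift A w : GL (Fin n) K) : Matrix (Fin n) (Fin n) K) - 1).det ≠ 0)
    (xh : Fin n → K) :
    ∃ T : S → Equiv.Perm (Fin n → K),
      -- `T_i (x) = A_i x + u_i` with `u_i = (I - A_i) xh`
      (∀ i (y : Fin n → K), T i y =
        ((A i : GL (Fin n) K) : Matrix (Fin n) (Fin n) K).mulVec y +
          ((1 : Matrix (Fin n) (Fin n) K) -
            ((A i : GL (Fin n) K) : Matrix (Fin n) (Fin n) K)).mulVec xh) ∧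
      -- `{T_i}` is a basis of a free subgroup `F'` of the affine group
      Function.Injective (FreeGroup.lift T : FreeGroup S →* Equiv.Perm (Fin n → K)) ∧
      -- `F'` acts on `K^n \ {xh}` without nontrivial fixed points
      (∀ w : FreeGroup S, w ≠ 1 → ∀ y : Fin n → K, y ≠ xh → FreeGroup.lift T w y ≠ y) ∧
      -- the additional valued-field part
      (∀ (v : K → ℝ), IsNAV v → ∀ (x : Fin n → K) (r ε : ℝ), x ≠ xh →
        0 < r → r < stdNorm v (x - xh) → 0 < ε →
        ε ≤ (if xh = 0 then r / stdNorm v x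
             else min (r / stdNorm v (x - xh)) (1 / stdNorm v xh)) →
        -- `F ≤ SL(n,D,ε)`
        (∀ w : FreeGroup S,
          (∀ i j, v (((FreeGroup.lift A w : GL (Fin n) K) : Matrix (Fin n) (Fin n) K) i j) ≤ 1) ∧
          ((FreeGroup.lift A w : GL (Fin n) K) : Matrix (Fin n) (Fin n) K).det = 1 ∧
          (∀ i, v ((((FreeGroup.lift A w : GL (Fin n) K) : Matrix (Fin n) (Fin n) K)) i i - 1) < ε) ∧
          (∀ i j, i ≠ j →
            v ((((FreeGroup.lift A w : GL (Fin n) K) : Matrix (Fin n) (Fin n) K)) i j) < ε)) →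
        -- then `F' ≤ SA(n,D,ε)` …
        (∀ w : FreeGroup S, memSAeps v ε (FreeGroup.lift T w)) ∧
        -- … and `F'` acts without nontrivial fixed points on `B[x,r]`, `B(x,r)` and `S[x,r]`
        (∀ w : FreeGroup S, w ≠ 1 → ∀ y ∈ cBall v x r, FreeGroup.lift T w y ≠ y) ∧
        (∀ w : FreeGroup S, w ≠ 1 → ∀ y ∈ oBall v x r, FreeGroup.lift T w y ≠ y) ∧
        (∀ w : FreeGroup S, w ≠ 1 → ∀ y ∈ sph v x r, FreeGroup.lift T w y ≠ y)) := by
  have hlift : ⇑(FreeGroup.lift fun i => affineConj xh (A i)) = affineConj xh ∘ FreeGroup.lift A :=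
    funext fun _ => (FreeGroup.lift_unique ((affineConj xh).comp (FreeGroup.lift A))
      fun _ => by simp).symm
  have hfix : ∀ w : FreeGroup S, w ≠ 1 → ∀ y, y ≠ xh →
      FreeGroup.lift (fun i => affineConj xh (A i)) w y ≠ y := fun w hw y hy h =>
    hy (eq_of_affineConj_apply_eq (hdet w hw) (by rwa [hlift] at h))
  refine ⟨fun i => affineConj xh (A i), fun i => affineConj_apply_eq_mulVec_add xh (A i),
    hlift ▸ (affineConj_injective xh).comp hfree, hfix, ?_⟩
  intro v hv x r ε _ _ hxr hε hεle hSL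
  have hfixBall : ∀ w : FreeGroup S, w ≠ 1 → ∀ y ∈ cBall v x r,
      FreeGroup.lift (fun i => affineConj xh (A i)) w y ≠ y := fun w hw y hy =>
    hfix w hw y (ne_of_mem_of_not_mem hy (hv.notMem_cBall hxr))
  have hεxh : xh ≠ 0 → ε ≤ 1 / stdNorm v xh := fun h =>
    (if_neg h ▸ hεle).trans (min_le_right _ _)
  refine ⟨fun w => ?_, hfixBall, fun w hw y hy => hfixBall w hw y (oBall_subset_cBall v x r hy),
    fun w hw y hy => hfixBall w hw y (sph_subset_cBall v x r hy)⟩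
  rw [hlift]
  exact memSAeps_affineConj hv (hSL w) (hv.mul_apply_le_one hε hεxh)
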